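/- Let v ∈ ℝ^N with v ≠ 0, and let λ > 0 and η > 0. The function z ↦ λ·‖z‖₂ + (η/2)·‖v − z‖₂² on ℝ^N attains its minimum at z* = v · max(‖v‖₂ − λ/η, 0)/‖v‖₂; that is, λ‖z*‖₂ + (η/2)‖v − z*‖₂² ≤ λ‖z‖₂ + (η/2)‖v − z‖₂² for all z ∈ ℝ^N. -/

import Mathlib

/-!
The objective depends on `z` only through `‖z‖` and `‖v - z‖`. By the reverse triangle
inequality `|‖v‖ - ‖z‖| ≤ ‖v - z‖` it is bounded below by the scalar problem
`r ↦ λ r + (η/2)(‖v‖ - r)²` at `r = ‖z‖`, with equality at `z = (r / ‖v‖) • v` for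
`0 ≤ r ≤ ‖v‖`. On `r ≥ 0` the scalar problem is minimized by soft thresholding,
`r* = max (‖v‖ - λ/η) 0`, and `z*` is the equality point for `r*`.
-/

open Set

theorem isMinOn_max_sub_div_zero {lam η : ℝ} (hη : 0 < η) (a : ℝ) :
    IsMinOn (fun r => lam * r + η / 2 * (a - r) ^ 2) (Ici 0) (max (a - lam / η) 0) := by
  intro r (hr : 0 ≤ r)
  have hlη : lam / η * η = lam := div_mul_cancel₀ lam hη.ne'
  rcases le_total (a - lam / η) 0 with hle | hle
  · rw [mem_ofPred_eq, max_eq_right hle]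
    -- `η a ≤ λ`, so the difference `r (λ - η a) + (η/2) r²` is nonnegative
    nlinarith [mul_nonneg hr (sub_nonneg.2 (mul_le_mul_of_nonneg_right
      (sub_nonpos.1 hle) hη.le)), mul_nonneg hη.le (sq_nonneg r)]
  · rw [mem_ofPred_eq, max_eq_left hle]
    -- the difference is `(η/2) (a - r - λ/η)²`
    nlinarith [mul_nonneg hη.le (sq_nonneg (a - r - lam / η))]

theorem sq_norm_sub_norm_le_sq_norm_sub {E : Type*} [SeminormedAddCommGroup E] (v z : E) :
    (‖v‖ - ‖z‖) ^ 2 ≤ ‖v - z‖ ^ 2 :=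
  sq_le_sq.2 ((abs_norm_sub_norm_le v z).trans_eq (abs_norm _).symm)

section NormedSpace

variable {E : Type*} [NormedAddCommGroup E] [NormedSpace ℝ E]

theorem norm_div_norm_smul_of_le {v : E} {r : ℝ} (hr : 0 ≤ r) (hrv : r ≤ ‖v‖) :
    ‖(r / ‖v‖) • v‖ = r := by
  rcases eq_or_ne v 0 with rfl | hv
  · simpa using le_antisymm hr (by simpa using hrv)
  · rw [norm_smul, Real.norm_of_nonneg (by positivity),
      div_mul_cancel₀ _ (norm_ne_zero_iff.2 hv)]

theorem norm_sub_div_norm_smul_of_le {v : E} {r : ℝ} (hr : 0 ≤ r) (hrv : r ≤ ‖v‖) :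
    ‖v - (r / ‖v‖) • v‖ = ‖v‖ - r := by
  rcases eq_or_ne v 0 with rfl | hv
  · simpa using (le_antisymm hr (by simpa using hrv)).symm
  · have hcoef : 0 ≤ 1 - r / ‖v‖ := sub_nonneg.2 ((div_le_one (norm_pos_iff.2 hv)).2 hrv)
    rw [show v - (r / ‖v‖) • v = (1 - r / ‖v‖) • v by rw [sub_smul, one_smul], norm_smul,
      Real.norm_of_nonneg hcoef, sub_mul, one_mul, div_mul_cancel₀ _ (norm_ne_zero_iff.2 hv)]

end NormedSpace

theorem block_soft_thresholding_general {N : ℕ} (v : EuclideanSpace ℝ (Fin N))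
    (lam η : ℝ) (hlam : 0 < lam) (hη : 0 < η) :
    ∀ z : EuclideanSpace ℝ (Fin N),
      lam * ‖(max (‖v‖ - lam / η) 0 / ‖v‖) • v‖ +
        (η / 2) * ‖v - (max (‖v‖ - lam / η) 0 / ‖v‖) • v‖ ^ 2 ≤
      lam * ‖z‖ + (η / 2) * ‖v - z‖ ^ 2 := by
  intro z
  set r := max (‖v‖ - lam / η) 0
  have hr : 0 ≤ r := le_max_right _ _
  have hrv : r ≤ ‖v‖ := max_le (sub_le_self _ (by positivity)) (norm_nonneg v)
  rw [norm_div_norm_smul_of_le hr hrv, norm_sub_div_norm_smul_of_le hr hrv]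
  calc lam * r + η / 2 * (‖v‖ - r) ^ 2
      ≤ lam * ‖z‖ + η / 2 * (‖v‖ - ‖z‖) ^ 2 :=
        isMinOn_max_sub_div_zero hη ‖v‖ (norm_nonneg z)
    _ ≤ lam * ‖z‖ + η / 2 * ‖v - z‖ ^ 2 := by
        gcongr _ + _ * ?_
        exact sq_norm_sub_norm_le_sq_norm_sub v z

/-- Lemma 2: the block soft-thresholding problem `z ↦ λ‖z‖₂ + (η/2)‖v − z‖₂²`
attains its minimum at `z* = v · max(‖v‖₂ − λ/η, 0)/‖v‖₂` (for `v ≠ 0`). -/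
theorem block_soft_thresholding {N : ℕ} (v : EuclideanSpace ℝ (Fin N)) (hv : v ≠ 0)
    (lam η : ℝ) (hlam : 0 < lam) (hη : 0 < η) :
    ∀ z : EuclideanSpace ℝ (Fin N),
      lam * ‖(max (‖v‖ - lam / η) 0 / ‖v‖) • v‖ +
        (η / 2) * ‖v - (max (‖v‖ - lam / η) 0 / ‖v‖) • v‖ ^ 2 ≤
      lam * ‖z‖ + (η / 2) * ‖v - z‖ ^ 2 :=
  block_soft_thresholding_general v lam η hlam hη
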